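/- For any elements x, y of a Cayley-Dickson loop Q_n, the commutator [x,y] defined by xy = (yx)[x,y] equals -1 if x ∉ {±1}, y ∉ {±1}, and x ≠ ±y, and equals 1 otherwise. -/

import Mathlib

/-- The underlying set of the Cayley-Dickson loop `Q n`:
`Q 0 = {±1}` (encoded as `Bool`, `false = 1`, `true = -1`) and `Q (n+1) = Q n × Bool`,
an element `(x, b)` encoding `(x, 0)` if `b = false` and `(x, 1)` if `b = true`. -/
def Q : ℕ → Type
  | 0 => Bool
  | n+1 => Q n × Bool

namespace Q

def one : ∀ n, Q n
  | 0 => false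
  | n+1 => (one n, false)

def neg : ∀ n, Q n → Q n
  | 0, x => !x
  | n+1, (x, b) => (neg n x, b)

def conj : ∀ n, Q n → Q n
  | 0, x => x
  | n+1, (x, false) => (conj n x, false)
  | n+1, (x, true) => (neg n x, true)

/-- Cayley-Dickson doubling multiplication restricted to the loop:
`(x,0)(y,0) = (xy,0)`, `(x,0)(y,1) = (yx,1)`, `(x,1)(y,0) = (xy*,1)`, `(x,1)(y,1) = (-y*x,0)`. -/
def mul : ∀ n, Q n → Q n → Q n
  | 0, x, y => xor x y
  | n+1, (x, false), (y, false) => (mul n x y, false)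
  | n+1, (x, false), (y, true)  => (mul n y x, true)
  | n+1, (x, true),  (y, false) => (mul n x (conj n y), true)
  | n+1, (x, true),  (y, true)  => (neg n (mul n (conj n y) x), false)

instance (n : ℕ) : One (Q n) := ⟨one n⟩
instance (n : ℕ) : Neg (Q n) := ⟨neg n⟩
instance (n : ℕ) : Mul (Q n) := ⟨mul n⟩
instance (n : ℕ) : Star (Q n) := ⟨conj n⟩
/-- In `Q n` the inverse of `x` is its conjugate `x*`. -/
instance (n : ℕ) : Inv (Q n) := ⟨conj n⟩

instance instDecEq : ∀ n, DecidableEq (Q n)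
  | 0 => inferInstanceAs (DecidableEq Bool)
  | n+1 => letI := instDecEq n; inferInstanceAs (DecidableEq (Q n × Bool))

instance instFintype : ∀ n, Fintype (Q n)
  | 0 => inferInstanceAs (Fintype Bool)
  | n+1 => letI := instFintype n; inferInstanceAs (Fintype (Q n × Bool))

/-- Powers in `Q n` (well defined by diassociativity). -/
def pow {n : ℕ} (x : Q n) : ℕ → Q n
  | 0 => 1
  | k+1 => x * pow x k

/-- The embedding `x ↦ (x, 0)` of `Q n` into `Q (n+1)`. -/
def up {n : ℕ} (x : Q n) : Q (n+1) := (x, false)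

/-- The map `x ↦ (x, 1)` from `Q n` into `Q (n+1)`. -/
def up1 {n : ℕ} (x : Q n) : Q (n+1) := (x, true)

/-- The commutator `[x,y]`, defined by `xy = (yx)[x,y]`. -/
def comm {n : ℕ} (x y : Q n) : Q n := (y * x)⁻¹ * (x * y)

/-- The associator `[x,y,z]`, defined by `(xy)z = (x(yz))[x,y,z]`. -/
def assoc {n : ℕ} (x y z : Q n) : Q n := (x * (y * z))⁻¹ * ((x * y) * z)

/-- A subloop of the Cayley-Dickson loop `Q n`: a subset containing `1` and closed
under multiplication and inverses (= conjugates). -/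
structure Subloop (n : ℕ) where
  carrier : Set (Q n)
  one_mem : (1 : Q n) ∈ carrier
  mul_mem : ∀ ⦃x y : Q n⦄, x ∈ carrier → y ∈ carrier → x * y ∈ carrier
  inv_mem : ∀ ⦃x : Q n⦄, x ∈ carrier → x⁻¹ ∈ carrier

/-- The subloop of `Q n` generated by a set `s`. -/
def closure (n : ℕ) (s : Set (Q n)) : Set (Q n) :=
  ⋂₀ {t : Set (Q n) | s ⊆ t ∧ (1 : Q n) ∈ t ∧
      (∀ x ∈ t, ∀ y ∈ t, x * y ∈ t) ∧ (∀ x ∈ t, x⁻¹ ∈ t)}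

end Q

/-!
Every element of `Q n` is `±1` or an imaginary unit, i.e. `x⁻¹ = x* = -x`. The units `±1` are
central and `x` commutes with `±x`, so in the degenerate cases `[x,y] = 1`. Two imaginary units
`x ≠ ±y` anticommute: by induction along the doubling formulas, the only case that is not a
direct computation is `(a,1)(b,1) = (-b*a, 0)`, where one needs `b* a = -(a* b)`, which for
imaginary `a`, `b` is the anticommutation one level down. Hence `[x,y] = (yx)⁻¹(±yx) = ±1`.
-/

namespace Q

variable {n : ℕ}

@[elab_as_elim]
theorem succ_cases {motive : Q (n+1) → Prop} (up : ∀ a, motive (up a))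
    (up1 : ∀ a, motive (up1 a)) : ∀ x, motive x
  | (a, false) => up a
  | (a, true) => up1 a

section Unfolding

variable (a b : Q n)

@[simp] theorem one_succ : (1 : Q (n+1)) = up 1 := rfl
@[simp] theorem neg_up : -up a = up (-a) := rfl
@[simp] theorem neg_up1 : -up1 a = up1 (-a) := rfl
@[simp] theorem inv_up : (up a)⁻¹ = up a⁻¹ := rfl
@[simp] theorem inv_up1 : (up1 a)⁻¹ = up1 (-a) := rfl
@[simp] theorem up_mul_up : up a * up b = up (a * b) := rfl
@[simp] theorem up_mul_up1 : up a * up1 b = up1 (b * a) := rfl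
@[simp] theorem up1_mul_up : up1 a * up b = up1 (a * b⁻¹) := rfl
@[simp] theorem up1_mul_up1 : up1 a * up1 b = up (-(b⁻¹ * a)) := rfl

end Unfolding

theorem up_injective : Function.Injective (up : Q n → Q (n+1)) :=
  fun _ _ h => congrArg Prod.fst h

theorem up1_injective : Function.Injective (up1 : Q n → Q (n+1)) :=
  fun _ _ h => congrArg Prod.fst h

@[simp] theorem up_inj {a b : Q n} : up a = up b ↔ a = b := up_injective.eq_iff

@[simp] theorem up1_inj {a b : Q n} : up1 a = up1 b ↔ a = b := up1_injective.eq_iff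

@[simp] protected theorem neg_neg : ∀ {n} (x : Q n), -(-x) = x
  | 0, x => by revert x; decide
  | _+1, x => by induction x using succ_cases <;> simp [Q.neg_neg]

@[simp] protected theorem inv_one : ∀ {n}, (1 : Q n)⁻¹ = 1
  | 0 => rfl
  | _+1 => by simp [Q.inv_one]

@[simp] protected theorem inv_neg : ∀ {n} (x : Q n), (-x)⁻¹ = -x⁻¹
  | 0, x => by revert x; decide
  | _+1, x => by induction x using succ_cases <;> simp [Q.inv_neg]

@[simp] protected theorem mul_one : ∀ {n} (x : Q n), x * 1 = x
  | 0, x => by revert x; decide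
  | _+1, x => by induction x using succ_cases <;> simp [Q.mul_one]

@[simp] protected theorem one_mul : ∀ {n} (x : Q n), 1 * x = x
  | 0, x => by revert x; decide
  | _+1, x => by induction x using succ_cases <;> simp [Q.one_mul, Q.mul_one]

mutual

@[simp] protected theorem neg_mul : ∀ {n} (x y : Q n), -x * y = -(x * y)
  | 0, x, y => by revert x y; decide
  | _+1, x, y => by
    induction x using succ_cases <;> induction y using succ_cases <;>
      simp [Q.neg_mul, Q.mul_neg]

@[simp] protected theorem mul_neg : ∀ {n} (x y : Q n), x * -y = -(x * y)
  | 0, x, y => by revert x y; decide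
  | _+1, x, y => by
    induction x using succ_cases <;> induction y using succ_cases <;>
      simp [Q.neg_mul, Q.mul_neg]

end

@[simp] protected theorem inv_mul_cancel : ∀ {n} (x : Q n), x⁻¹ * x = 1
  | 0, x => by revert x; decide
  | _+1, x => by induction x using succ_cases <;> simp [Q.inv_mul_cancel]

theorem inv_eq_neg_of_ne : ∀ {n} {x : Q n}, x ≠ 1 → x ≠ -1 → x⁻¹ = -x
  | 0, x => by revert x; decide
  | _+1, x => by
    induction x using succ_cases with
    | up a => simpa using inv_eq_neg_of_ne (x := a)
    | up1 a => simp

theorem mul_comm_of_degenerate {x y : Q n}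
    (h : x = 1 ∨ x = -1 ∨ y = 1 ∨ y = -1 ∨ x = y ∨ x = -y) : x * y = y * x := by
  rcases h with rfl | rfl | rfl | rfl | rfl | rfl <;> simp

theorem inv_mul_eq_neg_inv_mul {a b : Q n} (hab : a ≠ b) (hab' : a ≠ -b)
    (hanti : a⁻¹ = -a → b⁻¹ = -b → a * b = -(b * a)) : b⁻¹ * a = -(a⁻¹ * b) := by
  by_cases ha1 : a = 1
  · subst ha1
    have hb := inv_eq_neg_of_ne (Ne.symm hab) (fun h => hab' (by simp [h]))
    simp [hb]
  by_cases ha2 : a = -1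
  · subst ha2
    have hb := inv_eq_neg_of_ne (fun h => hab' (by simp [h])) (Ne.symm hab)
    simp [hb]
  have ha := inv_eq_neg_of_ne ha1 ha2
  by_cases hb1 : b = 1
  · simp [hb1, ha]
  by_cases hb2 : b = -1
  · simp [hb2, ha]
  have hb := inv_eq_neg_of_ne hb1 hb2
  simp [ha, hb, hanti ha hb]

theorem mul_anticomm : ∀ {n} {x y : Q n}, x⁻¹ = -x → y⁻¹ = -y → x ≠ y → x ≠ -y →
    x * y = -(y * x)
  | 0, x, y => by revert x y; decide
  | _+1, x, y => by
    induction x using succ_cases with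
    | up a =>
      induction y using succ_cases with
      | up b => simpa using mul_anticomm (x := a) (y := b)
      | up1 b => intro ha; simp_all
    | up1 a =>
      induction y using succ_cases with
      | up b => intro _ hb; simp_all
      | up1 b =>
        intro _ _ hab hab'
        simp only [ne_eq, up1_inj, neg_up1] at hab hab'
        simp only [up1_mul_up1, neg_up, Q.neg_neg, up_inj]
        rw [inv_mul_eq_neg_inv_mul hab hab' (fun ha hb => mul_anticomm ha hb hab hab'),
          Q.neg_neg]

theorem comm_eq_one_of_mul_comm {x y : Q n} (h : x * y = y * x) : comm x y = 1 := by
  rw [comm, h, Q.inv_mul_cancel]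

theorem comm_eq_neg_one_of_mul_anticomm {x y : Q n} (h : x * y = -(y * x)) :
    comm x y = -1 := by
  rw [comm, h, Q.mul_neg, Q.inv_mul_cancel]

end Q

/-- For any elements `x, y` of a Cayley-Dickson loop `Q n`, the commutator `[x,y]`,
defined by `xy = (yx)[x,y]`, equals `-1` if `x ∉ {±1}`, `y ∉ {±1}` and `x ≠ ±y`,
and equals `1` otherwise. -/
theorem Q.comm_eq (n : ℕ) (x y : Q n) :
    x * y = (y * x) * Q.comm x y ∧
    ((x ≠ 1 ∧ x ≠ -1 ∧ y ≠ 1 ∧ y ≠ -1 ∧ x ≠ y ∧ x ≠ -y) → Q.comm x y = -1) ∧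
    (¬(x ≠ 1 ∧ x ≠ -1 ∧ y ≠ 1 ∧ y ≠ -1 ∧ x ≠ y ∧ x ≠ -y) → Q.comm x y = 1) := by
  by_cases hgen : x ≠ 1 ∧ x ≠ -1 ∧ y ≠ 1 ∧ y ≠ -1 ∧ x ≠ y ∧ x ≠ -y
  · obtain ⟨hx1, hx2, hy1, hy2, hxy, hxy'⟩ := hgen
    have hanti := mul_anticomm (inv_eq_neg_of_ne hx1 hx2) (inv_eq_neg_of_ne hy1 hy2) hxy hxy'
    have hc := comm_eq_neg_one_of_mul_anticomm hanti
    refine ⟨?_, fun _ => hc, fun h => absurd ⟨hx1, hx2, hy1, hy2, hxy, hxy'⟩ h⟩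
    rw [hc, Q.mul_neg, Q.mul_one, hanti]
  · have hcomm := mul_comm_of_degenerate (x := x) (y := y) (by tauto)
    have hc := comm_eq_one_of_mul_comm hcomm
    exact ⟨by rw [hc, Q.mul_one, hcomm], fun h => absurd h hgen, fun _ => hc⟩
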